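/- Let α > 0, β ≥ 0, h > 0 and a ∈ (0, 2π) with a ≠ π. If 0 < c < F(a) := α/(2cos²(a/2)) + β/h² + 2tan²(a/2)·(β/h²)·(β/(αh²) + 1), then every complex root z of z² + (α − (β/h²)(e^{ia} − 1))·z − α·c·(e^{ia} − 1) = 0 has Re(z) < 0. That is, below the critical curve the Fourier mode a is linearly stable. -/

import Mathlib

open Real Complex

/-!
With `e^{ia} - 1 = -2 sin²(a/2) + 2i sin(a/2) cos(a/2)`, the quadratic is `z² + p z + q` with
`Re p = α + 2 (β/h²) sin²(a/2) > 0` and `Re q = 2 α c sin²(a/2) > 0`. Its Hurwitz determinant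
`(Re p)² Re q + Re p Im p Im q - (Im q)²` factors as `Re q` times a quantity which, after
multiplying `F(a)` out by `2 α cos²(a/2)`, is positive exactly when `c < F(a)`. The
Routh–Hurwitz criterion for complex quadratics then puts both roots in the open left half-plane.
-/

/-- The Routh–Hurwitz criterion for a monic complex quadratic `z² + p z + q`. -/
theorem re_neg_of_quadratic_eq_zero_of_hurwitz {p q z : ℂ} (hp : 0 < p.re) (hq : 0 < q.re)
    (hpq : 0 < p.re ^ 2 * q.re + p.re * p.im * q.im - q.im ^ 2)
    (hz : z ^ 2 + p * z + q = 0) : z.re < 0 := by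
  have hre := congrArg Complex.re hz
  have him := congrArg Complex.im hz
  simp only [add_re, add_im, mul_re, mul_im, sq, zero_re, zero_im] at hre him
  set x := z.re
  set y := z.im
  by_contra! hx
  -- Eliminating `y` between the real and imaginary parts leaves a quartic in `x` whose
  -- coefficients are all positive, so it has no root `x ≥ 0`.
  have quartic : 4 * x ^ 4 + 8 * p.re * x ^ 3 + (5 * p.re ^ 2 + 4 * q.re + p.im ^ 2) * x ^ 2
      + p.re * (p.re ^ 2 + 4 * q.re + p.im ^ 2) * x
      + (p.re ^ 2 * q.re + p.re * p.im * q.im - q.im ^ 2) = 0 := by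
    linear_combination (2 * x + p.re) ^ 2 * hre
      + (y * (2 * x + p.re) - p.im * x - q.im + p.im * (2 * x + p.re)) * him
  have : 0 ≤ 4 * x ^ 4 + 8 * p.re * x ^ 3 + (5 * p.re ^ 2 + 4 * q.re + p.im ^ 2) * x ^ 2
      + p.re * (p.re ^ 2 + 4 * q.re + p.im ^ 2) * x := by positivity
  linarith

theorem exp_I_mul_sub_one_re (a : ℝ) : (exp (I * a) - 1).re = -2 * Real.sin (a / 2) ^ 2 := by
  have h := Real.cos_two_mul' (a / 2)
  rw [mul_div_cancel₀ a two_ne_zero] at h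
  rw [sub_re, mul_comm, exp_ofReal_mul_I_re, one_re]
  linear_combination h + Real.sin_sq_add_cos_sq (a / 2)

theorem exp_I_mul_sub_one_im (a : ℝ) :
    (exp (I * a) - 1).im = 2 * Real.sin (a / 2) * Real.cos (a / 2) := by
  rw [sub_im, mul_comm, exp_ofReal_mul_I_im, one_im, ← Real.sin_two_mul,
    mul_div_cancel₀ a two_ne_zero, sub_zero]

theorem cos_half_ne_zero {a : ℝ} (ha : a ∈ Set.Ioo 0 (2 * π)) (haπ : a ≠ π) :
    Real.cos (a / 2) ≠ 0 := by
  intro hcos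
  have : a / 2 = π / 2 :=
    Real.injOn_cos ⟨by linarith [ha.1], by linarith [ha.2]⟩
      ⟨by positivity, by linarith [pi_pos]⟩ (hcos.trans Real.cos_pi_div_two.symm)
  exact haπ (by linarith)

theorem mul_critical_curve_eq {α k a : ℝ} (hα : α ≠ 0) (hcos : Real.cos (a / 2) ≠ 0) :
    2 * α * Real.cos (a / 2) ^ 2 * (α / (2 * Real.cos (a / 2) ^ 2) + k
        + 2 * Real.tan (a / 2) ^ 2 * k * (k / α + 1))
      = (α + 2 * k * Real.sin (a / 2) ^ 2) ^ 2
        + 2 * k * Real.cos (a / 2) ^ 2 * (α + 2 * k * Real.sin (a / 2) ^ 2) := by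
  rw [Real.tan_eq_sin_div_cos]
  field_simp
  linear_combination -4 * k ^ 2 * Real.sin (a / 2) ^ 2 * Real.sin_sq_add_cos_sq (a / 2)

theorem re_neg_of_characteristic_eq_zero {α k c a : ℝ} (hα : 0 < α) (hk : 0 ≤ k)
    (hc0 : 0 < c) (hs : 0 < Real.sin (a / 2))
    (hcrit : 2 * α * c * Real.cos (a / 2) ^ 2 < (α + 2 * k * Real.sin (a / 2) ^ 2) ^ 2
      + 2 * k * Real.cos (a / 2) ^ 2 * (α + 2 * k * Real.sin (a / 2) ^ 2))
    {z : ℂ} (hz : z ^ 2 + ((α : ℂ) - k * (exp (I * a) - 1)) * z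
      - (α : ℂ) * c * (exp (I * a) - 1) = 0) :
    z.re < 0 := by
  have hE_re := exp_I_mul_sub_one_re a
  have hE_im := exp_I_mul_sub_one_im a
  set s := Real.sin (a / 2)
  set co := Real.cos (a / 2)
  set E := exp (I * a) - 1
  have hp_re : ((α : ℂ) - k * E).re = α + 2 * k * s ^ 2 := by
    simp only [sub_re, mul_re, ofReal_re, ofReal_im, hE_re]; ring
  have hp_im : ((α : ℂ) - k * E).im = -(2 * k * s * co) := by
    simp only [sub_im, mul_im, ofReal_re, ofReal_im, hE_im]; ring
  have hq_re : (-((α : ℂ) * c * E)).re = 2 * α * c * s ^ 2 := by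
    simp only [neg_re, mul_re, mul_im, ofReal_re, ofReal_im, hE_re]; ring
  have hq_im : (-((α : ℂ) * c * E)).im = -(2 * α * c * s * co) := by
    simp only [neg_im, mul_im, mul_re, ofReal_re, ofReal_im, hE_im]; ring
  rw [sub_eq_add_neg] at hz
  refine re_neg_of_quadratic_eq_zero_of_hurwitz ?_ ?_ ?_ hz
  · rw [hp_re]; positivity
  · rw [hq_re]; positivity
  · rw [hp_re, hp_im, hq_re, hq_im]
    have hq_re_pos : 0 < 2 * α * c * s ^ 2 := by positivity
    linear_combination mul_pos hq_re_pos (sub_pos.2 hcrit)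

theorem stability_below_critical_curve_general
    (α β h c : ℝ) (hα : 0 < α) (hβ : 0 ≤ β)
    (a : ℝ) (ha : a ∈ Set.Ioo (0 : ℝ) (2 * Real.pi)) (haπ : a ≠ Real.pi)
    (hc0 : 0 < c)
    (hc : c < α / (2 * Real.cos (a / 2) ^ 2) + β / h ^ 2
        + 2 * Real.tan (a / 2) ^ 2 * (β / h ^ 2) * (β / (α * h ^ 2) + 1)) :
    ∀ z : ℂ,
      z ^ 2 + ((α : ℂ) - ((β : ℂ) / (h : ℂ) ^ 2) * (Complex.exp (Complex.I * a) - 1)) * z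
        - (α : ℂ) * (c : ℂ) * (Complex.exp (Complex.I * a) - 1) = 0 →
      z.re < 0 := by
  intro z hz
  have hs : 0 < Real.sin (a / 2) :=
    Real.sin_pos_of_pos_of_lt_pi (by linarith [ha.1]) (by linarith [ha.2])
  have hcos := cos_half_ne_zero ha haπ
  rw [div_mul_eq_div_div_swap β α] at hc
  set k := β / h ^ 2 with hk
  have hcrit : 2 * α * c * Real.cos (a / 2) ^ 2 < (α + 2 * k * Real.sin (a / 2) ^ 2) ^ 2
      + 2 * k * Real.cos (a / 2) ^ 2 * (α + 2 * k * Real.sin (a / 2) ^ 2) := by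
    rw [← mul_critical_curve_eq hα.ne' hcos, mul_right_comm _ c]
    exact mul_lt_mul_of_pos_left hc (by positivity)
  exact re_neg_of_characteristic_eq_zero hα (by positivity) hc0 hs hcrit (by push_cast [hk]; exact hz)

/-- Below the critical curve the Fourier mode `a` is linearly stable: if
`0 < c < F(a) = α/(2 cos²(a/2)) + β/h² + 2 tan²(a/2) (β/h²)(β/(α h²) + 1)`,
then every root of the characteristic quadratic has strictly negative real part. -/
theorem stability_below_critical_curve
    (α β h c : ℝ) (hα : 0 < α) (hβ : 0 ≤ β) (hh : 0 < h)
    (a : ℝ) (ha : a ∈ Set.Ioo (0 : ℝ) (2 * Real.pi)) (haπ : a ≠ Real.pi)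
    (hc0 : 0 < c)
    (hc : c < α / (2 * Real.cos (a / 2) ^ 2) + β / h ^ 2
        + 2 * Real.tan (a / 2) ^ 2 * (β / h ^ 2) * (β / (α * h ^ 2) + 1)) :
    ∀ z : ℂ,
      z ^ 2 + ((α : ℂ) - ((β : ℂ) / (h : ℂ) ^ 2) * (Complex.exp (Complex.I * a) - 1)) * z
        - (α : ℂ) * (c : ℂ) * (Complex.exp (Complex.I * a) - 1) = 0 →
      z.re < 0 :=
  stability_below_critical_curve_general α β h c hα hβ a ha haπ hc0 hc
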